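/- arXiv:2002.05382 — 4 statements merged into one kernel-verified Lean document; each statement's English description precedes it below -/
import Mathlib

section
/- For a positive natural number a, let L(a) denote the strictly decreasing list of the positions of the 1-bits in the binary representation of a (most significant first), and define Bit_a(ℓ) to be the ℓ-th entry of L(a) when ℓ ≤ length of L(a), and −1 otherwise (entries are taken as integers). Then for all distinct positive natural numbers a and b: (i) there exists a least index ℓ ≥ 1 such that Bit_a(ℓ) ≠ Bit_b(ℓ), and this ℓ satisfies ℓ ≤ min(popcount(a), popcount(b)) + 1, where popcount denotes the number of 1-bits; (ii) for this least ℓ, a < b if and only if Bit_a(ℓ) < Bit_b(ℓ). -/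
/-- `onesList a` is the list of positions of the 1-bits of `a` (position 0 = least
significant bit), listed in strictly decreasing order (most significant first). -/
def onesList (a : ℕ) : List ℕ :=
  ((List.range (a + 1)).filter (fun i => a.testBit i)).reverse

/-- Number of 1-bits of `a`. -/
def popCount (a : ℕ) : ℕ := (onesList a).length

/-- `bitFn a ℓ` is the `ℓ`-th entry (1-indexed) of `onesList a` as an integer,
i.e. the position of the `ℓ`-th 1-bit of `a` counted from the most significant
bit, and `-1` if `a` has fewer than `ℓ` one-bits. -/
def bitFn (a : ℕ) (ℓ : ℕ) : ℤ :=
  ((onesList a)[ℓ - 1]?).elim (-1) (fun x => (x : ℤ))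

/-! A number is the sum of `2 ^ i` over its bit positions, and a sum of distinct powers of two is
less than twice its largest term. So once `L(a)` and `L(b)` stop agreeing, the number whose next
entry is larger (a missing entry counting as `-1`) is the larger number. Two numbers with equal
lists are equal, so a first disagreement exists; past the end of both lists nothing differs any
more, which bounds it by one more than the shorter length. -/

theorem onesList_eq_reverse_bitIndices (a : ℕ) : onesList a = a.bitIndices.reverse := by
  refine congrArg List.reverse ((List.pairwise_lt_range.filter _).sortedLT.eq_of_mem_iff
    Nat.bitIndices_sorted fun i => ?_)
  simp only [List.mem_filter, List.mem_range, Nat.mem_bitIndices, and_iff_right_iff_imp]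
  exact fun h => Nat.lt_succ_of_lt (Nat.lt_two_pow_self.trans_le (Nat.ge_two_pow_of_testBit h))

theorem pairwise_gt_onesList (a : ℕ) : (onesList a).Pairwise (· > ·) := by
  simpa [onesList_eq_reverse_bitIndices, List.pairwise_reverse] using
    (Nat.bitIndices_sorted (n := a)).pairwise

theorem sum_map_two_pow_onesList (a : ℕ) : ((onesList a).map (2 ^ ·)).sum = a := by
  simp [onesList_eq_reverse_bitIndices, List.map_reverse]

theorem onesList_injective : Function.Injective onesList := fun a b h => by
  rw [← sum_map_two_pow_onesList a, h, sum_map_two_pow_onesList]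

theorem sum_map_two_pow_lt_two_pow {L : List ℕ} {n : ℕ} (hL : L.Pairwise (· > ·))
    (hn : ∀ x ∈ L, x < n) : (L.map (2 ^ ·)).sum < 2 ^ n := by
  induction L generalizing n with
  | nil => simp
  | cons x L ih =>
    rw [List.pairwise_cons] at hL
    have hx : x < n := hn x List.mem_cons_self
    calc 2 ^ x + (L.map (2 ^ ·)).sum < 2 ^ x + 2 ^ x := by gcongr; exact ih hL.2 hL.1
      _ = 2 ^ (x + 1) := by ring
      _ ≤ 2 ^ n := Nat.pow_le_pow_right two_pos hx

-- `bitFn a ℓ` is definitionally `toIntOrNegOne (onesList a)[ℓ - 1]?`; the main proof relies on this.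
def toIntOrNegOne (o : Option ℕ) : ℤ := o.elim (-1) (↑)

theorem toIntOrNegOne_injective : Function.Injective toIntOrNegOne := by
  rintro (_ | x) (_ | y) h <;> simp_all [toIntOrNegOne]

theorem neg_one_le_toIntOrNegOne (o : Option ℕ) : -1 ≤ toIntOrNegOne o := by
  cases o <;> simp [toIntOrNegOne]

theorem sum_map_two_pow_lt_of_head_lt {L M : List ℕ} (hL : L.Pairwise (· > ·))
    (h : toIntOrNegOne L.head? < toIntOrNegOne M.head?) :
    (L.map (2 ^ ·)).sum < (M.map (2 ^ ·)).sum := by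
  obtain _ | ⟨y, M⟩ := M
  · exact absurd h (neg_one_le_toIntOrNegOne _).not_gt
  have hM : 2 ^ y ≤ ((y :: M).map (2 ^ ·)).sum := by simp
  refine lt_of_lt_of_le (sum_map_two_pow_lt_two_pow hL fun x hx => ?_) hM
  obtain _ | ⟨x, L⟩ := L
  · simp at hx
  have hxy : x < y := by simpa [toIntOrNegOne] using h
  rcases List.mem_cons.1 hx with rfl | hx
  · exact hxy
  · exact (List.rel_of_pairwise_cons hL hx).trans hxy

theorem sum_map_two_pow_lt_iff {L M : List ℕ} {k : ℕ} (hL : L.Pairwise (· > ·))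
    (hM : M.Pairwise (· > ·)) (hpre : ∀ j < k, L[j]? = M[j]?)
    (hk : toIntOrNegOne L[k]? ≠ toIntOrNegOne M[k]?) :
    (L.map (2 ^ ·)).sum < (M.map (2 ^ ·)).sum ↔ toIntOrNegOne L[k]? < toIntOrNegOne M[k]? := by
  have htake : L.take k = M.take k := List.ext_getElem? fun j => by
    simp only [List.getElem?_take]
    split_ifs with hj
    exacts [hpre j hj, rfl]
  have hsplit (N : List ℕ) :
      (N.map (2 ^ ·)).sum = ((N.take k).map (2 ^ ·)).sum + ((N.drop k).map (2 ^ ·)).sum := by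
    rw [← List.sum_append, ← List.map_append, List.take_append_drop]
  rw [hsplit L, hsplit M, htake, Nat.add_lt_add_iff_left, ← List.head?_drop, ← List.head?_drop]
  rw [← List.head?_drop, ← List.head?_drop] at hk
  rcases hk.lt_or_gt with hlt | hgt
  · exact iff_of_true (sum_map_two_pow_lt_of_head_lt hL.drop hlt) hlt
  · exact iff_of_false (sum_map_two_pow_lt_of_head_lt hM.drop hgt).not_gt hgt.not_gt

theorem List.getElem?_eq_of_min_length_le {α : Type*} {L M : List α} {m j : ℕ}
    (h : L[m]? = M[m]?) (hm : min L.length M.length ≤ m) (hj : m ≤ j) : L[j]? = M[j]? := by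
  have hlen : L.length ≤ m ∧ M.length ≤ m := by
    rcases min_le_iff.1 hm with hL | hM
    · exact ⟨hL, List.getElem?_eq_none_iff.1 (h ▸ List.getElem?_eq_none hL)⟩
    · exact ⟨List.getElem?_eq_none_iff.1 (h ▸ List.getElem?_eq_none hM), hM⟩
  rw [List.getElem?_eq_none (by omega), List.getElem?_eq_none (by omega)]

theorem exists_least_bit_difference_general (a b : ℕ) (hab : a ≠ b) :
    ∃ ℓ : ℕ, 1 ≤ ℓ ∧ bitFn a ℓ ≠ bitFn b ℓ ∧
      (∀ ℓ', 1 ≤ ℓ' → bitFn a ℓ' ≠ bitFn b ℓ' → ℓ ≤ ℓ') ∧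
      ℓ ≤ min (popCount a) (popCount b) + 1 ∧
      (a < b ↔ bitFn a ℓ < bitFn b ℓ) := by
  have hdiff : ∃ ℓ, 1 ≤ ℓ ∧ bitFn a ℓ ≠ bitFn b ℓ := by
    by_contra! h
    exact hab (onesList_injective (List.ext_getElem? fun j =>
      toIntOrNegOne_injective (h (j + 1) j.succ_pos)))
  obtain ⟨hℓ, hne⟩ := Nat.find_spec hdiff
  have hagree : ∀ j < Nat.find hdiff - 1, (onesList a)[j]? = (onesList b)[j]? := fun j hj =>
    toIntOrNegOne_injective (not_not.1 fun h =>
      Nat.find_min hdiff (show j + 1 < Nat.find hdiff by omega) ⟨j.succ_pos, h⟩)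
  refine ⟨Nat.find hdiff, hℓ, hne, fun ℓ' h1 h2 => Nat.find_min' hdiff ⟨h1, h2⟩, ?_, ?_⟩
  · by_contra! hlt
    exact hne (congrArg toIntOrNegOne
      (List.getElem?_eq_of_min_length_le (hagree (min (popCount a) (popCount b)) (by omega))
        le_rfl (by omega)))
  · conv_lhs => rw [← sum_map_two_pow_onesList a, ← sum_map_two_pow_onesList b]
    exact sum_map_two_pow_lt_iff (pairwise_gt_onesList a) (pairwise_gt_onesList b) hagree hne

/-- For distinct positive naturals `a` and `b`, there is a least
index `ℓ ≥ 1` where `bitFn a` and `bitFn b` differ; this `ℓ` is at most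
`min(popCount a, popCount b) + 1`, and `a < b` iff `bitFn a ℓ < bitFn b ℓ`. -/
theorem exists_least_bit_difference (a b : ℕ) (ha : 0 < a) (hb : 0 < b) (hab : a ≠ b) :
    ∃ ℓ : ℕ, 1 ≤ ℓ ∧ bitFn a ℓ ≠ bitFn b ℓ ∧
      (∀ ℓ', 1 ≤ ℓ' → bitFn a ℓ' ≠ bitFn b ℓ' → ℓ ≤ ℓ') ∧
      ℓ ≤ min (popCount a) (popCount b) + 1 ∧
      (a < b ↔ bitFn a ℓ < bitFn b ℓ) :=
  exists_least_bit_difference_general a b hab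
end

section
/- Let G = (V,E) be a finite simple graph with injective identifiers id : V → ℕ. Consider the greedy recoloring step on colorings c : V → ℕ: a vertex v is enabled in c if some neighbor of v has the same color as v and every neighbor w of v with c(w) = c(v) satisfies id(w) > id(v); a step at an enabled vertex v produces the coloring c' with c'(v) equal to the least color in {1, …, δ(v)+1} not used by any neighbor of v (δ(v) the degree of v) and c'(u) = c(u) for all u ≠ v. Then recoloring steps never create new conflicts: if a vertex u has no neighbor sharing its color in c, and c' is obtained from c by a recoloring step at some vertex v ≠ u, then u has no neighbor sharing its color in c'. -/
/-- Vertex `v` is in conflict in coloring `c` if some neighbor shares its color. -/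
def Conflict {V : Type*} (G : SimpleGraph V) (c : V → ℕ) (v : V) : Prop :=
  ∃ w, G.Adj v w ∧ c w = c v

/-- Vertex `v` is enabled in `c` if it is in conflict and every neighbor sharing
its color has a larger identifier. -/
def Enabled {V : Type*} (G : SimpleGraph V) (id : V → ℕ) (c : V → ℕ) (v : V) : Prop :=
  Conflict G c v ∧ ∀ w, G.Adj v w → c w = c v → id v < id w

/-- The least color in `{1, …, δ(v)+1}` not used by any neighbor of `v`. -/
noncomputable def newColor {V : Type*} [Fintype V] (G : SimpleGraph V)
    [DecidableRel G.Adj] (c : V → ℕ) (v : V) : ℕ :=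
  sInf {k : ℕ | 1 ≤ k ∧ k ≤ G.degree v + 1 ∧ ∀ w, G.Adj v w → c w ≠ k}

/-- A greedy recoloring step at vertex `v` turns `c` into `c'`: `v` is enabled and
`c'` recolors `v` with the least color in `{1, …, δ(v)+1}` unused by `v`'s
neighbors, leaving all other vertices unchanged. -/
def RecolorStep {V : Type*} [Fintype V] [DecidableEq V] (G : SimpleGraph V)
    [DecidableRel G.Adj] (id : V → ℕ) (c : V → ℕ) (v : V) (c' : V → ℕ) : Prop :=
  Enabled G id c v ∧ c' = Function.update c v (newColor G c v)

open Finset in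
lemma exists_color_unused_by_neighbors {V : Type*} [Fintype V] (G : SimpleGraph V)
    [DecidableRel G.Adj] (c : V → ℕ) (v : V) :
    ∃ k, 1 ≤ k ∧ k ≤ G.degree v + 1 ∧ ∀ w, G.Adj v w → c w ≠ k := by
  classical
  have hlt : #((G.neighborFinset v).image c) < #(Icc 1 (G.degree v + 1)) := by
    calc #((G.neighborFinset v).image c) ≤ #(G.neighborFinset v) := card_image_le
      _ = G.degree v := G.card_neighborFinset_eq_degree v
      _ < #(Icc 1 (G.degree v + 1)) := by simp
  obtain ⟨k, hk, hunused⟩ := exists_mem_notMem_of_card_lt_card hlt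
  obtain ⟨hk1, hkdeg⟩ := mem_Icc.mp hk
  exact ⟨k, hk1, hkdeg, fun w hw hck => hunused (mem_image.mpr ⟨w, by simpa using hw, hck⟩)⟩

lemma newColor_ne_of_adj {V : Type*} [Fintype V] (G : SimpleGraph V)
    [DecidableRel G.Adj] (c : V → ℕ) {v w : V} (hvw : G.Adj v w) :
    c w ≠ newColor G c v :=
  (Nat.sInf_mem (exists_color_unused_by_neighbors G c v)).2.2 w hvw

lemma not_conflict_update {V : Type*} [DecidableEq V] {G : SimpleGraph V} {c : V → ℕ}
    {u v : V} {k : ℕ} (hu : ¬ Conflict G c u) (hvu : v ≠ u)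
    (hk : ∀ w, G.Adj v w → c w ≠ k) :
    ¬ Conflict G (Function.update c v k) u := by
  rintro ⟨w, huw, hcw⟩
  rw [Function.update_of_ne hvu.symm] at hcw
  by_cases hwv : w = v
  · subst hwv
    exact hk u huw.symm (by simpa using hcw.symm)
  · exact hu ⟨w, huw, by rwa [Function.update_of_ne hwv] at hcw⟩

theorem recolorStep_preserves_no_conflict_general {V : Type*} [Fintype V] [DecidableEq V]
    (G : SimpleGraph V) [DecidableRel G.Adj] (id : V → ℕ)
    (c c' : V → ℕ) (u v : V) (huv : v ≠ u)
    (hu : ¬ Conflict G c u) (hstep : RecolorStep G id c v c') :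
    ¬ Conflict G c' u := by
  obtain ⟨-, rfl⟩ := hstep
  exact not_conflict_update hu huv fun w hvw => newColor_ne_of_adj G c hvw

/-- Recoloring steps never create new conflicts: if `u` has no
neighbor sharing its color in `c`, and `c'` is obtained from `c` by a recoloring
step at some vertex `v ≠ u`, then `u` has no neighbor sharing its color in `c'`. -/
theorem recolorStep_preserves_no_conflict {V : Type*} [Fintype V] [DecidableEq V]
    (G : SimpleGraph V) [DecidableRel G.Adj] (id : V → ℕ)
    (hinj : Function.Injective id) (c c' : V → ℕ) (u v : V) (huv : v ≠ u)
    (hu : ¬ Conflict G c u) (hstep : RecolorStep G id c v c') :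
    ¬ Conflict G c' u :=
  recolorStep_preserves_no_conflict_general G id c c' u v huv hu hstep
end

section
/- Let G = (V,E) be a finite simple graph with injective identifiers id : V → ℕ, and consider the greedy recoloring step on colorings c : V → ℕ. If a coloring c has at least one monochromatic edge (two adjacent vertices with the same color), then some vertex is enabled in c; in particular, the vertex with the smallest identifier among all vertices that are in conflict is enabled. -/
/-! Every neighbor `w` of a vertex `v` sharing its color is itself in conflict, so if `v` has the
least identifier among conflicted vertices then `id v ≤ id w`, and injectivity makes this strict.
A conflicted vertex of least identifier exists because `ℕ` is well founded. -/

section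

variable {V : Type*} {G : SimpleGraph V} {c : V → ℕ}

theorem Conflict.of_adj {v w : V} (hadj : G.Adj v w) (hc : c w = c v) : Conflict G c w :=
  ⟨v, hadj.symm, hc.symm⟩

theorem Enabled.of_conflict_of_id_le {id : V → ℕ} (hinj : Function.Injective id) {v : V}
    (hv : Conflict G c v) (hmin : ∀ u, Conflict G c u → id v ≤ id u) : Enabled G id c v :=
  ⟨hv, fun w hadj hc => (hmin w (.of_adj hadj hc)).lt_of_ne
    fun h => G.ne_of_adj hadj (hinj h)⟩

theorem exists_conflict_id_le (id : V → ℕ) (hconf : ∃ v, Conflict G c v) :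
    ∃ v, Conflict G c v ∧ ∀ u, Conflict G c u → id v ≤ id u := by
  obtain ⟨v, hv, hmin⟩ := (InvImage.wf id wellFounded_lt).has_min {v | Conflict G c v} hconf
  exact ⟨v, hv, fun u hu => not_lt.mp (hmin u hu)⟩

end

theorem enabled_of_monochromatic_edge_general {V : Type*}
    (G : SimpleGraph V) (id : V → ℕ)
    (hinj : Function.Injective id) (c : V → ℕ)
    (hmono : ∃ u w, G.Adj u w ∧ c u = c w) :
    (∃ v, Enabled G id c v) ∧
      ∀ v, Conflict G c v → (∀ u, Conflict G c u → id v ≤ id u) →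
        Enabled G id c v := by
  obtain ⟨u, w, hadj, hc⟩ := hmono
  obtain ⟨v, hv, hmin⟩ := exists_conflict_id_le id ⟨u, .of_adj hadj.symm hc⟩
  exact ⟨⟨v, .of_conflict_of_id_le hinj hv hmin⟩,
    fun _ hv hmin => .of_conflict_of_id_le hinj hv hmin⟩

/-- If a coloring has a monochromatic edge, then some vertex is
enabled; in particular, any conflicted vertex of minimal identifier among the
conflicted vertices is enabled. -/
theorem enabled_of_monochromatic_edge {V : Type*} [Fintype V] [DecidableEq V]
    (G : SimpleGraph V) [DecidableRel G.Adj] (id : V → ℕ)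
    (hinj : Function.Injective id) (c : V → ℕ)
    (hmono : ∃ u w, G.Adj u w ∧ c u = c w) :
    (∃ v, Enabled G id c v) ∧
      ∀ v, Conflict G c v → (∀ u, Conflict G c u → id v ≤ id u) →
        Enabled G id c v :=
  enabled_of_monochromatic_edge_general G id hinj c hmono
end

section
/- Let G = (V,E) be a finite simple graph with maximum degree Δ and injective identifiers id : V → ℕ, and consider the greedy recoloring step on colorings c : V → ℕ. Then every maximal sequence of recoloring steps (one that cannot be extended) starting from an arbitrary coloring c₀ is finite, and its final coloring is a proper coloring of G (no two adjacent vertices share a color). Moreover, if the initial coloring satisfies c₀(v) ∈ {1, …, Δ+1} for every vertex v, then the final coloring is a proper (Δ+1)-coloring of G, i.e., it is proper and takes values in {1, …, Δ+1}. -/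
/-- A coloring is proper if adjacent vertices get distinct colors. -/
def ProperColoring {V : Type*} (G : SimpleGraph V) (c : V → ℕ) : Prop :=
  ∀ u w, G.Adj u w → c u ≠ c w

section Recoloring

variable {V : Type*} (G : SimpleGraph V)

section NewColor

variable [Fintype V] [DecidableRel G.Adj]

theorem exists_color_not_used_by_neighbors (c : V → ℕ) (v : V) :
    ∃ k, 1 ≤ k ∧ k ≤ G.degree v + 1 ∧ ∀ w, G.Adj v w → c w ≠ k := by
  classical
  have hused : ((G.neighborFinset v).image c).card ≤ G.degree v :=
    G.card_neighborFinset_eq_degree v ▸ Finset.card_image_le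
  have hcard : (Finset.Icc 1 (G.degree v + 1)).card = G.degree v + 1 := by simp
  obtain ⟨k, hk⟩ : (Finset.Icc 1 (G.degree v + 1) \ (G.neighborFinset v).image c).Nonempty := by
    rw [← Finset.card_pos]
    have := Finset.le_card_sdiff ((G.neighborFinset v).image c) (Finset.Icc 1 (G.degree v + 1))
    omega
  simp only [Finset.mem_sdiff, Finset.mem_Icc, Finset.mem_image, SimpleGraph.mem_neighborFinset,
    not_exists, not_and] at hk
  exact ⟨k, hk.1.1, hk.1.2, hk.2⟩

theorem newColor_spec (c : V → ℕ) (v : V) :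
    1 ≤ newColor G c v ∧ newColor G c v ≤ G.degree v + 1 ∧
      ∀ w, G.Adj v w → c w ≠ newColor G c v :=
  Nat.sInf_mem (exists_color_not_used_by_neighbors G c v)

variable [DecidableEq V]

theorem not_conflict_update_newColor_self (c : V → ℕ) (v : V) :
    ¬ Conflict G (Function.update c v (newColor G c v)) v := by
  rintro ⟨w, hadj, hw⟩
  rw [Function.update_self, Function.update_of_ne (G.ne_of_adj hadj).symm] at hw
  exact (newColor_spec G c v).2.2 w hadj hw

theorem Conflict.of_update_newColor {c : V → ℕ} {v u : V}
    (h : Conflict G (Function.update c v (newColor G c v)) u) : Conflict G c u := by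
  obtain rfl | hu := eq_or_ne u v
  · exact absurd h (not_conflict_update_newColor_self G c u)
  obtain ⟨w, hadj, hw⟩ := h
  rw [Function.update_of_ne hu] at hw
  obtain rfl | hwv := eq_or_ne w v
  · rw [Function.update_self] at hw
    exact absurd hw.symm ((newColor_spec G c w).2.2 u hadj.symm)
  · exact ⟨w, hadj, by rwa [Function.update_of_ne hwv] at hw⟩

theorem RecolorStep.conflict_ssubset {id c c' : V → ℕ} {v : V} (h : RecolorStep G id c v c') :
    {u | Conflict G c' u} ⊂ {u | Conflict G c u} := by
  obtain ⟨hv, rfl⟩ := h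
  exact Set.ssubset_iff_of_subset (fun u => Conflict.of_update_newColor G) |>.mpr
    ⟨v, hv.1, not_conflict_update_newColor_self G c v⟩

theorem not_exists_infinite_recolor_sequence (id : V → ℕ) :
    ¬ ∃ (cs : ℕ → V → ℕ) (vs : ℕ → V), ∀ i, RecolorStep G id (cs i) (vs i) (cs (i + 1)) := by
  rintro ⟨cs, vs, hstep⟩
  obtain ⟨i, hi⟩ := WellFounded.not_rel_apply_succ (α := Set V) (r := (· < ·))
    fun i => {u | Conflict G (cs i) u}
  exact hi (hstep i).conflict_ssubset

theorem RecolorStep.colors_le_maxDegree_succ {id c c' : V → ℕ} {v : V}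
    (h : RecolorStep G id c v c') (hc : ∀ u, 1 ≤ c u ∧ c u ≤ G.maxDegree + 1) :
    ∀ u, 1 ≤ c' u ∧ c' u ≤ G.maxDegree + 1 := by
  obtain ⟨-, rfl⟩ := h
  intro u
  obtain rfl | hu := eq_or_ne u v
  · rw [Function.update_self]
    have := G.degree_le_maxDegree u
    have := newColor_spec G c u
    omega
  · rw [Function.update_of_ne hu]
    exact hc u

theorem colors_le_maxDegree_succ_of_recolor_sequence {id : V → ℕ} {len : ℕ} {cs : ℕ → V → ℕ}
    {vs : ℕ → V} (hstep : ∀ i < len, RecolorStep G id (cs i) (vs i) (cs (i + 1)))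
    (h₀ : ∀ u, 1 ≤ cs 0 u ∧ cs 0 u ≤ G.maxDegree + 1) :
    ∀ u, 1 ≤ cs len u ∧ cs len u ≤ G.maxDegree + 1 := by
  induction len with
  | zero => exact h₀
  | succ n ih =>
    exact (hstep n n.lt_succ_self).colors_le_maxDegree_succ G
      (ih fun i hi => hstep i (hi.trans n.lt_succ_self))

end NewColor

theorem properColoring_of_forall_not_enabled {id : V → ℕ} (hinj : Function.Injective id)
    {c : V → ℕ} (h : ∀ v, ¬ Enabled G id c v) : ProperColoring G c := by
  intro u w hadj huw
  obtain ⟨v, hv, hmin⟩ :=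
    (InvImage.wf id wellFounded_lt).has_min {x | Conflict G c x} ⟨u, w, hadj, huw.symm⟩
  refine h v ⟨hv, fun x hvx hx => ?_⟩
  have hx_conflict : Conflict G c x := ⟨v, hvx.symm, hx.symm⟩
  exact (not_lt.mp (hmin x hx_conflict)).lt_of_ne (hinj.ne (G.ne_of_adj hvx))

end Recoloring

/-- Every maximal sequence of greedy recoloring steps is finite
(there is no infinite sequence of steps), and its final coloring — one in which no
vertex is enabled — is proper. Moreover, if the initial coloring takes values in
`{1, …, Δ+1}`, so does the final coloring, which is thus a proper
`(Δ+1)`-coloring. -/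
theorem maximal_recolor_sequence_proper {V : Type*} [Fintype V] [DecidableEq V]
    (G : SimpleGraph V) [DecidableRel G.Adj] (id : V → ℕ)
    (hinj : Function.Injective id) :
    (¬ ∃ (cs : ℕ → V → ℕ) (vs : ℕ → V),
        ∀ i : ℕ, RecolorStep G id (cs i) (vs i) (cs (i + 1))) ∧
    (∀ (c₀ : V → ℕ) (len : ℕ) (cs : ℕ → V → ℕ) (vs : ℕ → V),
        cs 0 = c₀ →
        (∀ i < len, RecolorStep G id (cs i) (vs i) (cs (i + 1))) →
        (∀ v, ¬ Enabled G id (cs len) v) →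
        ProperColoring G (cs len) ∧
          ((∀ v, 1 ≤ c₀ v ∧ c₀ v ≤ G.maxDegree + 1) →
            ∀ v, 1 ≤ cs len v ∧ cs len v ≤ G.maxDegree + 1)) := by
  refine ⟨not_exists_infinite_recolor_sequence G id, ?_⟩
  rintro c₀ len cs vs rfl hstep hfinal
  exact ⟨properColoring_of_forall_not_enabled G hinj hfinal,
    colors_le_maxDegree_succ_of_recolor_sequence G hstep⟩
end
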